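/- Let d ≥ 2 and N ≥ 4, and let ρ be a positive semidefinite complex matrix indexed by (Fin N → Fin d) with trace 1 (an N-partite density matrix with d-dimensional local systems). Define the diagonal outcome distribution p(x) = ρ(x, x) for x : Fin N → Fin d, with marginals p_k(i) = Σ_{x : x(k) = i} p(x) for k ∈ Fin N and i ∈ Fin d. Suppose the Finner inequality holds: p(x) ≤ √( Π_{k=0}^{N−1} p_k(x(k)) ) for all x : Fin N → Fin d. Let |GHZ_{N,d}⟩ ∈ ℂ^(Fin N → Fin d) be given by |GHZ_{N,d}⟩(x) = 1/√d if x is constant and 0 otherwise. Then ⟨GHZ_{N,d}| ρ |GHZ_{N,d}⟩ ≤ 1/d. -/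

import Mathlib

/-!
On constant strings `a⃗` the GHZ fidelity is `(1/d) ∑_{a,b} Re ρ(a⃗, b⃗)`, which positivity of `ρ`
bounds by `(1/d) (∑_a √p(a⃗))²`. Since every marginal is at most `1`, the Finner bound at `a⃗` may
keep only four of the `N` factors, and AM–GM then gives `√p(a⃗) ≤ ¼ ∑_{k ∈ s} p_k(a)` for a set `s`
of four parties. Summing over `a`, each marginal contributes `1`, so `∑_a √p(a⃗) ≤ 1`.
-/

open scoped BigOperators
open Matrix ComplexOrder

/-- The `N`-partite `d`-level GHZ state: amplitude `1/√d` on constant functions,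
`0` elsewhere. -/
noncomputable def ghzVec (N d : ℕ) : (Fin N → Fin d) → ℂ :=
  fun x => if ∀ i j : Fin N, x i = x j then ((1 / Real.sqrt d : ℝ) : ℂ) else 0

open Finset

namespace Matrix.PosSemidef

variable {n : Type*} {A : Matrix n n ℂ}

lemma re_apply_self_nonneg (hA : A.PosSemidef) (x : n) : 0 ≤ (A x x).re :=
  (Complex.nonneg_iff.mp hA.diag_nonneg).1

lemma normSq_apply_le (hA : A.PosSemidef) (x y : n) :
    Complex.normSq (A x y) ≤ (A x x).re * (A y y).re := by
  classical
  have hdet := (hA.submatrix ![x, y]).det_nonneg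
  have hyx : A y x = star (A x y) := (hA.isHermitian.apply y x).symm
  rw [det_fin_two] at hdet
  simp only [submatrix_apply, Matrix.cons_val_zero, Matrix.cons_val_one, hyx,
    Complex.star_def, Complex.mul_conj] at hdet
  have hxx := (Complex.nonneg_iff.mp (hA.diag_nonneg (i := x))).2.symm
  have hyy := (Complex.nonneg_iff.mp (hA.diag_nonneg (i := y))).2.symm
  have := (Complex.nonneg_iff.mp hdet).1
  simp only [Complex.sub_re, Complex.mul_re, Complex.ofReal_re, hxx, hyy] at this
  linarith

lemma re_apply_le_sqrt_mul_sqrt (hA : A.PosSemidef) (x y : n) :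
    (A x y).re ≤ √(A x x).re * √(A y y).re := by
  rw [← Real.sqrt_mul (hA.re_apply_self_nonneg x)]
  refine (le_abs_self _).trans (Real.abs_le_sqrt ?_)
  have := hA.normSq_apply_le x y
  rw [Complex.normSq_apply] at this
  nlinarith [mul_self_nonneg (A x y).im]

lemma sum_sum_re_apply_le_sq {α : Type*} [Fintype α] (hA : A.PosSemidef) (f : α → n) :
    ∑ a, ∑ b, (A (f a) (f b)).re ≤ (∑ a, √(A (f a) (f a)).re) ^ 2 := by
  rw [sq, sum_mul_sum]
  gcongr with a _ b _
  exact hA.re_apply_le_sqrt_mul_sqrt _ _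

end Matrix.PosSemidef

lemma star_dotProduct_mulVec_sum_smul_single {n α : Type*} [Fintype n] [DecidableEq n]
    [Fintype α] (A : Matrix n n ℂ) (f : α → n) (r : ℝ) :
    star (∑ a, (r : ℂ) • Pi.single (f a) 1) ⬝ᵥ A *ᵥ ∑ a, (r : ℂ) • Pi.single (f a) 1 =
      (r ^ 2 : ℝ) * ∑ a, ∑ b, A (f a) (f b) := by
  simp only [Complex.coe_smul, star_sum, star_smul, star_trivial, Pi.star_single, star_one,
    mulVec_sum, mulVec_smul, mulVec_single, MulOpposite.op_one, one_smul, dotProduct_sum,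
    dotProduct_smul, sum_dotProduct, smul_dotProduct, single_dotProduct, col_apply, one_mul,
    Complex.real_smul, mul_sum, Complex.ofReal_pow]
  rw [sum_comm]
  simp_rw [sq, mul_assoc]

lemma ghzVec_eq_sum (N d : ℕ) [NeZero N] :
    ghzVec N d = ∑ a : Fin d, ((1 / √d : ℝ) : ℂ) • Pi.single (fun _ => a) 1 := by
  funext x
  simp only [ghzVec, Finset.sum_apply, Pi.smul_apply, Pi.single_apply, smul_eq_mul, mul_ite,
    mul_one, mul_zero]
  by_cases hconst : ∀ i j, x i = x j
  · have hx : ∀ a, (x = fun _ => a) ↔ a = x 0 :=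
      fun a => ⟨fun hxa => by simp [hxa], fun ha => funext fun i => ha ▸ hconst i 0⟩
    rw [if_pos hconst]
    simp [hx]
  · have hx : ∀ a, x ≠ fun _ => a := fun a hxa => hconst (by simp [hxa])
    rw [if_neg hconst]
    simp [hx]

section Finner

variable {ι α : Type*} [Fintype ι] [DecidableEq ι] [Fintype α] [DecidableEq α]

def marginal (p : (ι → α) → ℝ) (k : ι) (a : α) : ℝ :=
  ∑ y, if y k = a then p y else 0

def SatisfiesFinner (p : (ι → α) → ℝ) : Prop :=
  ∀ x, p x ≤ √(∏ k, marginal p k (x k))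

variable {p : (ι → α) → ℝ}

lemma marginal_nonneg (hp : 0 ≤ p) (k : ι) (a : α) : 0 ≤ marginal p k a :=
  sum_nonneg fun y _ => ite_nonneg (hp y) le_rfl

lemma marginal_le_sum (hp : 0 ≤ p) (k : ι) (a : α) : marginal p k a ≤ ∑ y, p y :=
  sum_le_sum fun y _ => by split_ifs; exacts [le_rfl, hp y]

lemma sum_marginal (k : ι) : ∑ a, marginal p k a = ∑ y, p y := by
  simp [marginal, sum_comm (γ := α)]

lemma sqrt_le_sum_marginal_div_four (hp : 0 ≤ p) (hp1 : ∑ y, p y = 1) {x : ι → α}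
    (hx : p x ≤ √(∏ k, marginal p k (x k))) {s : Finset ι} (hs : #s = 4) :
    √(p x) ≤ (∑ k ∈ s, marginal p k (x k)) / 4 := by
  have hprod : ∏ k, marginal p k (x k) ≤ ∏ k ∈ s, marginal p k (x k) :=
    prod_le_prod_of_subset_of_le_one (subset_univ s) (fun k _ => marginal_nonneg hp k _)
      (fun k _ _ => hp1 ▸ marginal_le_sum hp k _)
  have hamgm :
      (∏ k ∈ s, marginal p k (x k)) ^ (4⁻¹ : ℝ) ≤ (∑ k ∈ s, marginal p k (x k)) / 4 := by
    simpa [hs] using Real.geom_mean_le_arith_mean s 1 (fun k => marginal p k (x k))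
      (fun _ _ => zero_le_one) (by simp [hs]) (fun k _ => marginal_nonneg hp k _)
  calc √(p x) ≤ √√(∏ k, marginal p k (x k)) := Real.sqrt_le_sqrt hx
    _ ≤ √√(∏ k ∈ s, marginal p k (x k)) := by gcongr
    _ = (∏ k ∈ s, marginal p k (x k)) ^ (4⁻¹ : ℝ) := by
      rw [Real.sqrt_eq_rpow, Real.sqrt_eq_rpow, ← Real.rpow_mul
        (prod_nonneg fun k _ => marginal_nonneg hp k _)]
      norm_num
    _ ≤ _ := hamgm

lemma sum_sqrt_apply_const_le_one (hp : 0 ≤ p) (hp1 : ∑ y, p y = 1) (hfinner : SatisfiesFinner p)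
    (hι : 4 ≤ Fintype.card ι) : ∑ a, √(p fun _ => a) ≤ 1 := by
  obtain ⟨s, -, hs⟩ := exists_subset_card_eq (s := univ) hι
  calc ∑ a, √(p fun _ => a) ≤ ∑ a, (∑ k ∈ s, marginal p k a) / 4 :=
        sum_le_sum fun a _ => sqrt_le_sum_marginal_div_four hp hp1 (hfinner _) hs
    _ = (∑ k ∈ s, ∑ a, marginal p k a) / 4 := by rw [← sum_div, sum_comm]
    _ = 1 := by simp [sum_marginal, hp1, hs]

end Finner

theorem finner_ghzNd_fidelity_bound_general (d N : ℕ) (hN : 4 ≤ N)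
    (ρ : Matrix (Fin N → Fin d) (Fin N → Fin d) ℂ)
    (hρ : ρ.PosSemidef) (htr : ρ.trace = 1)
    (hfinner : ∀ x : Fin N → Fin d,
      (ρ x x).re ≤
        Real.sqrt (∏ k : Fin N,
          ∑ y : Fin N → Fin d, if y k = x k then (ρ y y).re else 0)) :
    (star (ghzVec N d) ⬝ᵥ ρ *ᵥ ghzVec N d).re ≤ 1 / (d : ℝ) := by
  have : NeZero N := ⟨by omega⟩
  have hp1 : ∑ y, (ρ y y).re = 1 := by simpa [trace] using congrArg Complex.re htr
  have hsqrt : ∑ a : Fin d, √(ρ (fun _ => a) (fun _ => a)).re ≤ 1 :=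
    sum_sqrt_apply_const_le_one (p := fun y => (ρ y y).re) hρ.re_apply_self_nonneg hp1 hfinner
      (by simpa using hN)
  rw [ghzVec_eq_sum, star_dotProduct_mulVec_sum_smul_single, div_pow, one_pow,
    Real.sq_sqrt d.cast_nonneg, Complex.re_ofReal_mul]
  simp only [Complex.re_sum]
  calc 1 / (d : ℝ) * ∑ a, ∑ b, (ρ (fun _ => a) (fun _ => b)).re
      ≤ 1 / d * (∑ a, √(ρ (fun _ => a) (fun _ => a)).re) ^ 2 := by
        gcongr
        exact hρ.sum_sum_re_apply_le_sq _
    _ ≤ 1 / d := mul_le_of_le_one_right (by positivity) (pow_le_one₀ (by positivity) hsqrt)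

/-- an `N`-partite density matrix (with `d`-level parties, `d ≥ 2`,
`N ≥ 4`) whose computational-basis outcome distribution satisfies the Finner inequality
has `GHZ_{N,d}` fidelity at most `1/d`. -/
theorem finner_ghzNd_fidelity_bound (d N : ℕ) (hd : 2 ≤ d) (hN : 4 ≤ N)
    (ρ : Matrix (Fin N → Fin d) (Fin N → Fin d) ℂ)
    (hρ : ρ.PosSemidef) (htr : ρ.trace = 1)
    (hfinner : ∀ x : Fin N → Fin d,
      (ρ x x).re ≤
        Real.sqrt (∏ k : Fin N,
          ∑ y : Fin N → Fin d, if y k = x k then (ρ y y).re else 0)) :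
    (star (ghzVec N d) ⬝ᵥ ρ *ᵥ ghzVec N d).re ≤ 1 / (d : ℝ) :=
  finner_ghzNd_fidelity_bound_general d N hN ρ hρ htr hfinner
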